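/- Let X be a nonempty compact metrizable topological space and let Q = ∏_{n ∈ ℕ} [0,1] be the Hilbert cube. Then X can be embedded in Q as a Z-set: there exists a topological embedding f : X → Q such that f(X) ⊆ {q ∈ Q : q(0) = 0}, and there exists a continuous map H : [0,1] × Q → Q with H(0, q) = q for every q ∈ Q and with H(t, q) ∉ f(X) for every t ∈ (0,1] and q ∈ Q. -/
import Mathlib


/-- Every nonempty compact metrizable space embeds in the Hilbert cube
`Q = ∏_{n ∈ ℕ} [0,1]` as a Z-set. -/
theorem exists_zset_embedding_hilbertCube (X : Type*) [TopologicalSpace X]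
    [CompactSpace X] [TopologicalSpace.MetrizableSpace X] [Nonempty X] :
    ∃ f : X → (ℕ → unitInterval),
      Topology.IsEmbedding f ∧
      (∀ x : X, f x 0 = 0) ∧
      ∃ H : unitInterval × (ℕ → unitInterval) → (ℕ → unitInterval),
        Continuous H ∧
        (∀ q : ℕ → unitInterval, H (0, q) = q) ∧
        (∀ t : unitInterval, 0 < t → ∀ q : ℕ → unitInterval,
          H (t, q) ∉ Set.range f) := by
  letI : MetricSpace X := TopologicalSpace.metrizableSpaceMetric X
  obtain ⟨u, hu⟩ := TopologicalSpace.exists_dense_seq X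
  -- the embedding
  set f : X → (ℕ → unitInterval) := fun x n =>
    match n with
    | 0 => 0
    | n + 1 => Set.projIcc (0 : ℝ) 1 zero_le_one (dist x (u n)) with hf
  have hcont : Continuous f := by
    apply continuous_pi
    intro n
    match n with
    | 0 => exact continuous_const
    | n + 1 =>
      exact continuous_projIcc.comp (Continuous.dist continuous_id continuous_const)
  have hinj : Function.Injective f := by
    intro x y hxy
    by_contra hne
    have hdpos : 0 < dist x y := dist_pos.2 hne
    set ε := min 1 (dist x y / 2) with hε
    have hεpos : 0 < ε := lt_min one_pos (by linarith)
    obtain ⟨n, hn⟩ : ∃ n, dist x (u n) < ε / 2 := by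
      have := hu.exists_dist_lt x (half_pos hεpos)
      obtain ⟨n, hn⟩ := this
      exact ⟨n, hn⟩
    have hxlt : dist x (u n) < 1 := lt_of_lt_of_le (lt_of_lt_of_le hn (by linarith [min_le_left 1 (dist x y / 2)])) le_rfl
    have hxy' : dist x (u n) < dist y (u n) := by
      have h1 : dist x y ≤ dist x (u n) + dist y (u n) := by
        have := dist_triangle x (u n) y
        rwa [dist_comm (u n) y] at this
      have h2 : dist x (u n) < dist x y / 2 :=
        lt_of_lt_of_le hn (by linarith [min_le_right 1 (dist x y / 2)])
      linarith
    have := congrFun hxy (n + 1)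
    simp only [hf] at this
    have hval : (Set.projIcc (0 : ℝ) 1 zero_le_one (dist x (u n)) : ℝ) <
        (Set.projIcc (0 : ℝ) 1 zero_le_one (dist y (u n)) : ℝ) := by
      rw [Set.projIcc, Set.projIcc]
      simp only
      rw [max_eq_right, max_eq_right]
      · have h1 : min 1 (dist x (u n)) = dist x (u n) := min_eq_right hxlt.le
        rw [h1]
        exact lt_min (hxlt) hxy' |>.trans_le (min_le_min le_rfl le_rfl) |>.trans_le le_rfl
      · exact le_min zero_le_one dist_nonneg
      · exact le_min zero_le_one dist_nonneg
    rw [this] at hval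
    exact lt_irrefl _ hval
  have hemb : Topology.IsEmbedding f := (hcont.isClosedEmbedding hinj).isEmbedding
  refine ⟨f, hemb, fun x => rfl, ?_⟩
  refine ⟨fun p n => if n = 0 then max p.1 (p.2 0) else p.2 n, ?_, ?_, ?_⟩
  · apply continuous_pi
    intro n
    by_cases h : n = 0
    · simp only [h, if_true]
      exact Continuous.max continuous_fst ((continuous_apply 0).comp continuous_snd)
    · simp only [h, if_false]
      exact (continuous_apply n).comp continuous_snd
  · intro q
    funext n
    by_cases h : n = 0
    · simp [h]
    · simp [h]
  · intro t ht q hmem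
    obtain ⟨x, hx⟩ := hmem
    have h0 : f x 0 = 0 := rfl
    have := congrFun hx 0
    rw [h0] at this
    simp only [if_true] at this
    have : max t (q 0) = 0 := this.symm
    have ht' : t ≤ (0 : unitInterval) := le_of_max_le_left this.le
    exact absurd (lt_of_lt_of_le ht ht') (lt_irrefl 0)
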